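/- arXiv:1911.11461 — 9 statements merged into one kernel-verified Lean document; each statement's English description precedes it below -/
import Mathlib

section
/- If X is a topological space, W ⊆ X, and 𝒰 is a collection of open subsets of X such that for every subset C of W with |C| ≤ t(X) (the tightness of X) there exists U ∈ 𝒰 with closure(C) ⊆ U, then 𝒰 covers the closure of W. In particular, if X is Lindelöf, then W can be covered by countably many members of 𝒰. -/
open Cardinal Set Topology

universe u

/-- A free sequence of length `o` in the topology `t`: a transfinite sequence indexed by
the ordinals below `o` such that every initial segment's closure is disjoint from the
closure of the corresponding final segment. -/
def IsFreeSeqOn {X : Type u} (t : TopologicalSpace X) (o : Ordinal.{u})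
    (x : {α : Ordinal.{u} // α < o} → X) : Prop :=
  ∀ i : {α : Ordinal.{u} // α < o},
    @closure X t (x '' {j | j < i}) ∩ @closure X t (x '' {j | i ≤ j}) = ∅

/-- The tightness of a topology: the least infinite cardinal `κ` such that whenever a
point is in the closure of a set `A`, it is in the closure of a subset of `A` of
cardinality at most `κ`. -/
noncomputable def tightnessOf {X : Type u} (t : TopologicalSpace X) : Cardinal.{u} :=
  sInf {κ : Cardinal.{u} | ℵ₀ ≤ κ ∧ ∀ (A : Set X) (p : X), p ∈ @closure X t A →
    ∃ B ⊆ A, #↥B ≤ κ ∧ p ∈ @closure X t B}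

/-- The Lindelöf number: the least infinite cardinal `κ` such that every open cover has
a subcover of cardinality at most `κ`. -/
noncomputable def lindelofNumberOf {X : Type u} (t : TopologicalSpace X) : Cardinal.{u} :=
  sInf {κ : Cardinal.{u} | ℵ₀ ≤ κ ∧ ∀ 𝒰 : Set (Set X), (∀ U ∈ 𝒰, @IsOpen X t U) →
    ⋃₀ 𝒰 = Set.univ → ∃ 𝒱 ⊆ 𝒰, #↥𝒱 ≤ κ ∧ ⋃₀ 𝒱 = Set.univ}

/-- `F(X)`: the supremum of the cardinalities (lengths) of free sequences, at least ℵ₀. -/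
noncomputable def freeNumberOf {X : Type u} (t : TopologicalSpace X) : Cardinal.{u} :=
  ℵ₀ ⊔ sSup {c : Cardinal.{u} |
    ∃ x : {α : Ordinal.{u} // α < c.ord} → X, IsFreeSeqOn t c.ord x}

/-- The G_δ-modification: the topology generated by the G_δ-subsets. -/
def gDelta {X : Type u} (t : TopologicalSpace X) : TopologicalSpace X :=
  TopologicalSpace.generateFrom {s : Set X | @IsGδ X t s}

/-- `Cl_κ`-Lindelöf: every open `Cl_κ`-cover of any subset `W` contains a countable
subfamily covering `W`. -/
def ClLindelofOf {X : Type u} (t : TopologicalSpace X) (κ : Cardinal.{u}) : Prop :=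
  ∀ (W : Set X) (𝒰 : Set (Set X)), (∀ U ∈ 𝒰, @IsOpen X t U) →
    (∀ C ⊆ W, #↥C ≤ κ → ∃ U ∈ 𝒰, @closure X t C ⊆ U) →
    ∃ 𝒱 ⊆ 𝒰, 𝒱.Countable ∧ W ⊆ ⋃₀ 𝒱

theorem IsLindelof.elim_countable_sUnion_subcover {X : Type u} [TopologicalSpace X] {s : Set X}
    {𝒰 : Set (Set X)} (hs : IsLindelof s) (hopen : ∀ U ∈ 𝒰, IsOpen U) (hcover : s ⊆ ⋃₀ 𝒰) :
    ∃ 𝒱 ⊆ 𝒰, 𝒱.Countable ∧ s ⊆ ⋃₀ 𝒱 := by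
  rw [sUnion_eq_biUnion] at hcover
  obtain ⟨𝒱, h𝒱𝒰, h𝒱, hs𝒱⟩ := hs.elim_countable_subcover_image (c := id) hopen hcover
  exact ⟨𝒱, h𝒱𝒰, h𝒱, by rwa [sUnion_eq_biUnion]⟩

theorem exists_subset_card_le_tightnessOf {X : Type u} [t : TopologicalSpace X] {A : Set X}
    {p : X} (hp : p ∈ closure A) : ∃ B ⊆ A, #B ≤ tightnessOf t ∧ p ∈ closure B := by
  -- `sInf ∅ = 0`, so the infimum must be shown attained: `ℵ₀ ⊔ #X` lies in the set.
  have hmem := csInf_mem (s := {κ : Cardinal.{u} | ℵ₀ ≤ κ ∧ ∀ (A : Set X) (p : X),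
      p ∈ closure A → ∃ B ⊆ A, #B ≤ κ ∧ p ∈ closure B})
    ⟨ℵ₀ ⊔ #X, le_sup_left, fun A _ hp => ⟨A, subset_rfl, (mk_set_le A).trans le_sup_right, hp⟩⟩
  exact hmem.2 A p hp

theorem closure_subset_sUnion_of_forall_card_le_tightnessOf {X : Type u} [t : TopologicalSpace X]
    {W : Set X} {𝒰 : Set (Set X)}
    (hcov : ∀ C ⊆ W, #C ≤ tightnessOf t → ∃ U ∈ 𝒰, closure C ⊆ U) :
    closure W ⊆ ⋃₀ 𝒰 := by
  intro p hp
  obtain ⟨B, hBW, hBcard, hpB⟩ := exists_subset_card_le_tightnessOf hp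
  obtain ⟨U, hU𝒰, hBU⟩ := hcov B hBW hBcard
  exact ⟨U, hU𝒰, hBU hpB⟩

/-- an open `Cl_{t(X)}`-cover of `W` covers `closure W`; in particular, if
`X` is Lindelöf then `W` is covered by countably many members of the cover. -/
theorem statement0 {X : Type u} [tX : TopologicalSpace X] (W : Set X) (𝒰 : Set (Set X))
    (hopen : ∀ U ∈ 𝒰, IsOpen U)
    (hcov : ∀ C ⊆ W, #↥C ≤ tightnessOf tX → ∃ U ∈ 𝒰, closure C ⊆ U) :
    closure W ⊆ ⋃₀ 𝒰 ∧
      (LindelofSpace X → ∃ 𝒱 ⊆ 𝒰, 𝒱.Countable ∧ W ⊆ ⋃₀ 𝒱) := by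
  have hclosure : closure W ⊆ ⋃₀ 𝒰 := closure_subset_sUnion_of_forall_card_le_tightnessOf hcov
  refine ⟨hclosure, fun _ => ?_⟩
  obtain ⟨𝒱, h𝒱𝒰, h𝒱, hW𝒱⟩ :=
    isClosed_closure.isLindelof.elim_countable_sUnion_subcover hopen hclosure
  exact ⟨𝒱, h𝒱𝒰, h𝒱, subset_closure.trans hW𝒱⟩
end

section
/- If a topological space X has no free sequence of length ω₁ (i.e., every free sequence in X is countable), then X is Cl_ω-Lindelöf: for every subset W of X and every family 𝒰 of open sets such that the closure of every countable subset of W is contained in some member of 𝒰, some countable subfamily of 𝒰 covers W. -/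
open Cardinal Set Topology

universe u

/-!
If no countable subfamily of `𝒰` covers `W`, choose recursively points `x α ∈ W`, `α < ω₁`,
with `x α ∉ U β` for all `β ≤ α`, where `U β ∈ 𝒰` contains the closure of the countable set
`{x γ | γ < β}`. The closure of the final segment `{x γ | β ≤ γ}` then lies in the closed set
`(U β)ᶜ`, away from the closure of the initial segment, so `x` is a free sequence of length `ω₁`.
-/

theorem exists_recursive_choice {ι α : Type*} [LT ι] [WellFoundedLT ι]
    [Nonempty α] (Q : ι → (ι → α) → α → Prop)
    (hQ : ∀ i f g, (∀ j < i, f j = g j) → ∀ a, Q i f a → Q i g a)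
    (h : ∀ i f, ∃ a, Q i f a) : ∃ f : ι → α, ∀ i, Q i f (f i) := by
  classical
  let extend (i : ι) (prev : ∀ j, j < i → α) : ι → α := fun j =>
    if hj : j < i then prev j hj else Classical.arbitrary α
  let f : ι → α := wellFounded_lt.fix fun i prev => (h i (extend i prev)).choose
  refine ⟨f, fun i => ?_⟩
  have hf : f i = (h i (extend i fun j _ => f j)).choose := wellFounded_lt.fix_eq _ _
  rw [hf]
  refine hQ i _ f (fun j hj => ?_) _ (h i _).choose_spec
  simp only [extend, dif_pos hj]

theorem Ordinal.countable_Iio_of_lt_ord_aleph_one {o : Ordinal} (ho : o < (aleph 1).ord) :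
    (Iio o).Countable := by
  rw [← le_aleph0_iff_set_countable, Cardinal.mk_Iio_ordinal, lift_le_aleph0, ← lt_aleph_one_iff]
  exact lt_ord.1 ho

theorem countable_Iio_omega_one (i : {o : Ordinal.{u} // o < (aleph 1).ord}) :
    (Iio i).Countable :=
  (Ordinal.countable_Iio_of_lt_ord_aleph_one i.2).preimage Subtype.val_injective

theorem exists_seq_notMem_of_not_countable_cover {X ι : Type*} [LinearOrder ι]
    [WellFoundedLT ι] (hι : ∀ i : ι, (Iio i).Countable) {W : Set X} {𝒰 : Set (Set X)}
    (hW : ∀ 𝒱 ⊆ 𝒰, 𝒱.Countable → ¬W ⊆ ⋃₀ 𝒱) {U : Set X → Set X}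
    (hU : ∀ C ⊆ W, C.Countable → U C ∈ 𝒰) :
    ∃ x : ι → X, (∀ i, x i ∈ W) ∧ ∀ i j, i ≤ j → x j ∉ U (x '' Iio i) := by
  obtain ⟨w, -, -⟩ := not_subset.1 (hW ∅ (empty_subset _) countable_empty)
  have : Nonempty X := ⟨w⟩
  let Q (i : ι) (f : ι → X) (a : X) : Prop :=
    a ∈ W ∧ ∀ k ≤ i, f '' Iio k ⊆ W → a ∉ U (f '' Iio k)
  have hQ : ∀ i f g, (∀ j < i, f j = g j) → ∀ a, Q i f a → Q i g a := by
    rintro i f g hfg a ⟨haW, ha⟩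
    refine ⟨haW, fun k hk => ?_⟩
    have himg : f '' Iio k = g '' Iio k :=
      image_congr fun j (hj : j < k) => hfg j (hj.trans_le hk)
    exact himg ▸ ha k hk
  have hex : ∀ i f, ∃ a, Q i f a := by
    intro i f
    let 𝒱 := (fun k => U (f '' Iio k)) '' {k | k ≤ i ∧ f '' Iio k ⊆ W}
    have h𝒱 : 𝒱 ⊆ 𝒰 := by
      rintro _ ⟨k, ⟨-, hkW⟩, rfl⟩
      exact hU _ hkW ((hι k).image f)
    have h𝒱c : 𝒱.Countable := by
      refine Countable.image (((hι i).insert i).mono fun k hk => ?_) _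
      exact Iio_insert (a := i) ▸ hk.1
    obtain ⟨a, haW, ha⟩ := not_subset.1 (hW 𝒱 h𝒱 h𝒱c)
    exact ⟨a, haW, fun k hk hkW haU => ha ⟨_, ⟨k, ⟨hk, hkW⟩, rfl⟩, haU⟩⟩
  obtain ⟨x, hx⟩ := exists_recursive_choice Q hQ hex
  have hxW : ∀ i, x i ∈ W := fun i => (hx i).1
  refine ⟨x, hxW, fun i j hij => (hx j).2 i hij ?_⟩
  rintro _ ⟨k, -, rfl⟩
  exact hxW k

theorem isFreeSeqOn_of_forall_notMem {X : Type u} [TopologicalSpace X] {o : Ordinal.{u}}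
    {x : {α : Ordinal.{u} // α < o} → X} {U : {α : Ordinal.{u} // α < o} → Set X}
    (hUo : ∀ i, IsOpen (U i)) (hcl : ∀ i, closure (x '' Iio i) ⊆ U i)
    (hx : ∀ i j, i ≤ j → x j ∉ U i) : IsFreeSeqOn ‹_› o x := by
  intro i
  have hfinal : closure (x '' Ici i) ⊆ (U i)ᶜ :=
    closure_minimal (by rintro _ ⟨j, hij, rfl⟩; exact hx i j hij) (hUo i).isClosed_compl
  exact disjoint_iff_inter_eq_empty.1 <|
    (disjoint_compl_right.mono_left (hcl i)).mono_right hfinal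

/-- if `X` has no free sequence of length `ω₁`, then `X` is `Cl_ω`-Lindelöf. -/
theorem statement2 {X : Type u} [tX : TopologicalSpace X]
    (hfree : ¬∃ x : {α : Ordinal.{u} // α < (aleph 1).ord} → X,
      IsFreeSeqOn tX (aleph 1).ord x) :
    ClLindelofOf tX ℵ₀ := by
  intro W 𝒰 hopen hcov
  by_contra! hW
  simp only [le_aleph0_iff_set_countable] at hcov
  choose! U hU𝒰 hUcl using hcov
  obtain ⟨x, hxW, hxU⟩ := exists_seq_notMem_of_not_countable_cover countable_Iio_omega_one
    hW hU𝒰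
  have hsub : ∀ i, x '' Iio i ⊆ W := by rintro i _ ⟨j, -, rfl⟩; exact hxW j
  have hcnt : ∀ i, (x '' Iio i).Countable := fun i => (countable_Iio_omega_one i).image x
  exact hfree ⟨x, isFreeSeqOn_of_forall_notMem (fun i => hopen _ (hU𝒰 _ (hsub i) (hcnt i)))
    (fun i => hUcl _ (hsub i) (hcnt i)) hxU⟩
end

section
/- Let X be a regular (T3) topological space and κ an infinite cardinal. If X is Cl_κ-Lindelöf, then the tightness of the G_δ-modification X_δ is at most 2^κ: whenever A ⊆ X and p lies in the closure of A in X_δ, there exists W ⊆ A with |W| ≤ 2^κ such that p lies in the closure of W in X_δ. -/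
open Cardinal Set Topology

universe u

/-!
Fix, by regularity, for every `C` with `p ∉ cl C` an open `N C ∋ p` with `cl (N C) ∩ cl C = ∅`.
Build `W ⊆ A` by a closing-off argument of length `κ⁺`: whenever `D ⊆ W` has size `≤ κ` and, for a
countable family `𝒞` of subsets of `D`, the `G_δ` set `⋂ C ∈ 𝒞, N C` meets `A`, it meets `W`.
Each stage adds at most `2^κ` points, one per such pair `(D, 𝒞)`, and regularity of `κ⁺` puts every
`D` of size `≤ κ` inside an earlier stage.
If a `G_δ` set `⋂ O_n ∋ p` missed `W`, apply `Cl_κ`-Lindelöfness to each `W \ O_n` and the cover by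
the sets `(cl (N C))ᶜ`: countably many small `C ⊆ W` suffice, and `⋂ N C` over them is a `G_δ`
neighbourhood of `p` missing `W`, hence missing `A`, contradicting `p ∈ cl_δ A`.
-/

theorem power_le_two_power {c μ κ : Cardinal} (hκ : ℵ₀ ≤ κ) (hc : c ≤ 2 ^ κ) (hμ : μ ≤ κ) :
    c ^ μ ≤ 2 ^ κ :=
  calc c ^ μ ≤ (2 ^ κ) ^ μ := power_le_power_right hc
    _ = 2 ^ (κ * μ) := power_mul.symm
    _ ≤ 2 ^ (κ * κ) := power_le_power_left two_ne_zero (mul_le_mul' le_rfl hμ)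
    _ = 2 ^ κ := by rw [mul_eq_self hκ]

theorem mk_sUnion_le_of_countable {α : Type u} {κ : Cardinal.{u}} (hκ : ℵ₀ ≤ κ)
    {𝒞 : Set (Set α)} (h𝒞 : 𝒞.Countable) (hC : ∀ C ∈ 𝒞, #C ≤ κ) : #(⋃₀ 𝒞) ≤ κ :=
  calc #(⋃₀ 𝒞) ≤ #𝒞 * ⨆ C : 𝒞, #C := mk_sUnion_le 𝒞
    _ ≤ ℵ₀ * κ :=
      mul_le_mul' (le_aleph0_iff_set_countable.2 h𝒞) (ciSup_le' fun C : 𝒞 => hC C.1 C.2)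
    _ = κ := aleph0_mul_eq hκ

theorem mk_countable_subfamilies_le {α : Type u} {κ : Cardinal.{u}} (hκ : ℵ₀ ≤ κ) {D : Set α}
    (hD : #D ≤ κ) : #{𝒞 : Set (Set α) | 𝒞 ⊆ 𝒫 D ∧ #𝒞 ≤ ℵ₀} ≤ 2 ^ κ := by
  refine (mk_bounded_subset_le _ _).trans (power_le_two_power hκ ?_ hκ)
  rw [mk_powerset]
  exact max_le (power_le_power_left two_ne_zero hD) (hκ.trans (cantor κ).le)

section ClosingOff

variable {α : Type u} (κ : Cardinal.{u}) (F : Set α → Set α)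

noncomputable def closingOffStage : Ordinal.{u} → Set α :=
  Ordinal.lt_wf.fix fun o stage =>
    ⋃ D : {D : Set α // D ⊆ ⋃ (j) (h : j < o), stage j h ∧ #D ≤ κ}, F D

theorem closingOffStage_eq (o : Ordinal.{u}) :
    closingOffStage κ F o =
      ⋃ D : {D : Set α // D ⊆ ⋃ j < o, closingOffStage κ F j ∧ #D ≤ κ}, F D :=
  Ordinal.lt_wf.fix_eq _ o

theorem closingOffStage_subset {A : Set α} (hFA : ∀ D ⊆ A, #D ≤ κ → F D ⊆ A)
    (o : Ordinal.{u}) : closingOffStage κ F o ⊆ A := by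
  induction o using WellFoundedLT.induction with
  | _ o ih =>
    rw [closingOffStage_eq]
    exact iUnion_subset fun D => hFA D (D.2.1.trans (iUnion₂_subset ih)) D.2.2

theorem mk_closingOffStage_le (hκ : ℵ₀ ≤ κ) (hF : ∀ D : Set α, #D ≤ κ → #(F D) ≤ 2 ^ κ)
    {o : Ordinal.{u}} (ho : o < (Order.succ κ).ord) : #(closingOffStage κ F o) ≤ 2 ^ κ := by
  have h2κ : ℵ₀ ≤ (2 : Cardinal) ^ κ := hκ.trans (cantor κ).le
  induction o using WellFoundedLT.induction with
  | _ o ih =>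
    have hprev : #(⋃ j < o, closingOffStage κ F j) ≤ 2 ^ κ :=
      mk_biUnion_le_of_le (Order.lt_succ_iff.1 (lt_ord.1 ho) |>.trans (cantor κ).le) h2κ _
        fun j hj => ih j hj (hj.trans ho)
    have hsmall : #{D : Set α // D ⊆ ⋃ j < o, closingOffStage κ F j ∧ #D ≤ κ} ≤ 2 ^ κ :=
      (mk_bounded_subset_le _ κ).trans (power_le_two_power hκ (max_le hprev h2κ) le_rfl)
    rw [closingOffStage_eq]
    calc _ ≤ _ := mk_iUnion_le _
      _ ≤ 2 ^ κ * 2 ^ κ := mul_le_mul' hsmall (ciSup_le' fun D => hF D D.2.2)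
      _ = 2 ^ κ := mul_eq_self h2κ

theorem exists_lt_ord_subset_biUnion {c : Cardinal.{u}} (hc : c.IsRegular)
    {f : Ordinal.{u} → Set α} {D : Set α} (hD : #D < c) (hDf : D ⊆ ⋃ j < c.ord, f j) :
    ∃ o < c.ord, D ⊆ ⋃ j < o, f j := by
  choose g hgc hg using fun x : D => mem_iUnion₂.1 (hDf x.2)
  refine ⟨⨆ x, g x + 1, Ordinal.iSup_add_one_lt_of_lt_cof (by rwa [hc.cof_ord]) hgc,
    fun x hx => mem_iUnion₂.2 ⟨g ⟨x, hx⟩, ?_, hg ⟨x, hx⟩⟩⟩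
  exact (Order.lt_add_one_iff.2 le_rfl).trans_le (Ordinal.le_iSup (fun x => g x + 1) ⟨x, hx⟩)

theorem exists_subset_closed_under_small (hκ : ℵ₀ ≤ κ) {A : Set α}
    (hFA : ∀ D ⊆ A, #D ≤ κ → F D ⊆ A) (hF : ∀ D : Set α, #D ≤ κ → #(F D) ≤ 2 ^ κ) :
    ∃ W ⊆ A, #W ≤ 2 ^ κ ∧ ∀ D ⊆ W, #D ≤ κ → F D ⊆ W := by
  refine ⟨⋃ o < (Order.succ κ).ord, closingOffStage κ F o,
    iUnion₂_subset fun o _ => closingOffStage_subset κ F hFA o,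
    mk_biUnion_le_of_le ((card_ord _).trans_le (Order.succ_le_of_lt (cantor κ)))
      (hκ.trans (cantor κ).le) _ fun o ho => mk_closingOffStage_le κ F hκ hF ho,
    fun D hDW hD => ?_⟩
  obtain ⟨o, ho, hDo⟩ :=
    exists_lt_ord_subset_biUnion (isRegular_succ hκ) (hD.trans_lt (Order.lt_succ κ)) hDW
  have hFo : F D ⊆ closingOffStage κ F o := by
    rw [closingOffStage_eq]
    exact subset_iUnion_of_subset ⟨D, hDo, hD⟩ le_rfl
  exact hFo.trans (subset_iUnion₂_of_subset o ho le_rfl)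

end ClosingOff

theorem exists_subset_meets_of_meets {α : Type u} (κ : Cardinal.{u}) (hκ : ℵ₀ ≤ κ) (A : Set α)
    (𝒦 : Set α → Set (Set α)) (h𝒦 : ∀ D : Set α, #D ≤ κ → #(𝒦 D) ≤ 2 ^ κ) :
    ∃ W ⊆ A, #W ≤ 2 ^ κ ∧
      ∀ D ⊆ W, #D ≤ κ → ∀ K ∈ 𝒦 D, (K ∩ A).Nonempty → (K ∩ W).Nonempty := by
  let F (D : Set α) : Set α :=
    range fun K : {K // K ∈ 𝒦 D ∧ (K ∩ A).Nonempty} => K.2.2.some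
  obtain ⟨W, hWA, hWκ, hW⟩ := exists_subset_closed_under_small κ F hκ
    (fun D _ _ => range_subset_iff.2 fun K => K.2.2.some_mem.2)
    (fun D hD => mk_range_le.trans ((mk_subtype_mono fun K hK => hK.1).trans (h𝒦 D hD)))
  refine ⟨W, hWA, hWκ, fun D hDW hD K hK hKA => ?_⟩
  exact ⟨hKA.some, hKA.some_mem.1, hW D hDW hD ⟨⟨K, hK, hKA⟩, rfl⟩⟩

theorem Set.Countable.exists_countable_subset_image_superset {α β : Type*} {f : α → β}
    {s : Set α} {t : Set β} (ht : t.Countable) (hts : t ⊆ f '' s) :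
    ∃ u ⊆ s, u.Countable ∧ t ⊆ f '' u := by
  choose g hgs hgt using fun y : t => hts y.2
  have : Countable t := ht.to_subtype
  exact ⟨range g, range_subset_iff.2 hgs, countable_range g,
    fun y hy => ⟨g ⟨y, hy⟩, mem_range_self _, hgt _⟩⟩

section GDelta

variable {X : Type u} [t : TopologicalSpace X]

theorem isTopologicalBasis_gDelta :
    @TopologicalSpace.IsTopologicalBasis X (gDelta t) {s | IsGδ s} :=
  @TopologicalSpace.IsTopologicalBasis.mk X (gDelta t) _
    (fun _ h₁ _ h₂ _ hx => ⟨_, h₁.inter h₂, hx, subset_rfl⟩)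
    (sUnion_eq_univ_iff.2 fun _ => ⟨univ, IsGδ.univ, mem_univ _⟩) rfl

theorem mem_closure_gDelta_iff {s : Set X} {p : X} :
    p ∈ @closure X (gDelta t) s ↔ ∀ G, IsGδ G → p ∈ G → (G ∩ s).Nonempty :=
  @TopologicalSpace.IsTopologicalBasis.mem_closure_iff X (gDelta t) _
    isTopologicalBasis_gDelta _ _

theorem exists_isOpen_nhds_disjoint_closure_fun [RegularSpace X] (p : X) :
    ∃ N : Set X → Set X, (∀ C, IsOpen (N C)) ∧
      ∀ C, p ∉ closure C → p ∈ N C ∧ Disjoint (closure (N C)) (closure C) := by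
  have (C : Set X) :
      ∃ V, IsOpen V ∧ (p ∉ closure C → p ∈ V ∧ Disjoint (closure V) (closure C)) := by
    by_cases hC : p ∈ closure C
    · exact ⟨∅, isOpen_empty, absurd hC⟩
    obtain ⟨V, ⟨hpV, hV⟩, hVC⟩ := (hasBasis_opens_closure p).mem_iff.1
      (isClosed_closure.isOpen_compl.mem_nhds hC)
    exact ⟨V, hV, fun _ => ⟨hpV, subset_compl_iff_disjoint_right.1 hVC⟩⟩
  choose N hNo hN using this
  exact ⟨N, hNo, hN⟩

end GDelta

namespace ClLindelofOf

variable {X : Type u} [t : TopologicalSpace X] {κ : Cardinal.{u}} {p : X} {N : Set X → Set X}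

theorem exists_countable_cover (h : ClLindelofOf t κ)
    (hN : ∀ C, p ∉ closure C → p ∈ N C ∧ Disjoint (closure (N C)) (closure C))
    {W : Set X} (hpW : p ∉ closure W) :
    ∃ 𝒞 : Set (Set X), 𝒞.Countable ∧ (∀ C ∈ 𝒞, C ⊆ W ∧ #C ≤ κ) ∧
      W ⊆ ⋃ C ∈ 𝒞, (closure (N C))ᶜ := by
  have hpC {C} (hCW : C ⊆ W) : p ∉ closure C := fun hp => hpW (closure_mono hCW hp)
  obtain ⟨𝒱, h𝒱, h𝒱c, hW𝒱⟩ := h W ((fun C => (closure (N C))ᶜ) '' {C | C ⊆ W ∧ #C ≤ κ})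
    (forall_mem_image.2 fun _ _ => isClosed_closure.isOpen_compl)
    (fun C hCW hC => ⟨_, mem_image_of_mem _ ⟨hCW, hC⟩,
      subset_compl_iff_disjoint_left.2 (hN C (hpC hCW)).2⟩)
  obtain ⟨𝒞, h𝒞, h𝒞c, h𝒱𝒞⟩ := h𝒱c.exists_countable_subset_image_superset h𝒱
  refine ⟨𝒞, h𝒞c, h𝒞, hW𝒱.trans (sUnion_subset fun V hV => ?_)⟩
  obtain ⟨C, hC, rfl⟩ := h𝒱𝒞 hV
  exact subset_biUnion_of_mem (u := fun C => (closure (N C))ᶜ) hC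

theorem exists_countable_nhds_disjoint (h : ClLindelofOf t κ)
    (hN : ∀ C, p ∉ closure C → p ∈ N C ∧ Disjoint (closure (N C)) (closure C))
    {G W : Set X} (hG : IsGδ G) (hpG : p ∈ G) (hGW : Disjoint G W) :
    ∃ 𝒞 : Set (Set X), 𝒞.Countable ∧ (∀ C ∈ 𝒞, C ⊆ W ∧ #C ≤ κ) ∧
      p ∈ ⋂ C ∈ 𝒞, N C ∧ Disjoint (⋂ C ∈ 𝒞, N C) W := by
  obtain ⟨O, hO, rfl⟩ := isGδ_iff_eq_iInter_nat.1 hG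
  have hpO (n : ℕ) : p ∉ closure (W \ O n) := fun hp =>
    closure_minimal (fun _ hx => hx.2) (hO n).isClosed_compl hp (mem_iInter.1 hpG n)
  choose 𝒞 h𝒞c h𝒞 hW𝒞 using fun n => h.exists_countable_cover hN (hpO n)
  have h𝒞' : ∀ C ∈ ⋃ n, 𝒞 n, C ⊆ W ∧ #C ≤ κ ∧ p ∉ closure C := fun C hC => by
    obtain ⟨n, hC⟩ := mem_iUnion.1 hC
    exact ⟨(h𝒞 n C hC).1.trans sdiff_subset, (h𝒞 n C hC).2,
      fun hp => hpO n (closure_mono (h𝒞 n C hC).1 hp)⟩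
  refine ⟨⋃ n, 𝒞 n, countable_iUnion h𝒞c, fun C hC => ⟨(h𝒞' C hC).1, (h𝒞' C hC).2.1⟩,
    mem_iInter₂.2 fun C hC => (hN C (h𝒞' C hC).2.2).1, ?_⟩
  refine disjoint_left.2 fun x hxN hxW => disjoint_left.1 hGW (mem_iInter.2 fun n => ?_) hxW
  by_contra hxO
  obtain ⟨C, hC, hxC⟩ := mem_iUnion₂.1 (hW𝒞 n ⟨hxW, hxO⟩)
  exact hxC (subset_closure (mem_iInter₂.1 hxN C (mem_iUnion_of_mem n hC)))

end ClLindelofOf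

/-- if a regular space `X` is `Cl_κ`-Lindelöf then the tightness of its
`G_δ`-modification is at most `2^κ`. -/
theorem statement3 {X : Type u} [tX : TopologicalSpace X] [T3Space X]
    (κ : Cardinal.{u}) (hκ : ℵ₀ ≤ κ) (h : ClLindelofOf tX κ)
    (A : Set X) (p : X) (hp : p ∈ @closure X (gDelta tX) A) :
    ∃ W ⊆ A, #↥W ≤ 2 ^ κ ∧ p ∈ @closure X (gDelta tX) W := by
  obtain ⟨N, hNo, hN⟩ := exists_isOpen_nhds_disjoint_closure_fun p
  let 𝒦 (D : Set X) : Set (Set X) := (fun 𝒞 => ⋂ C ∈ 𝒞, N C) '' {𝒞 | 𝒞 ⊆ 𝒫 D ∧ #𝒞 ≤ ℵ₀}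
  obtain ⟨W, hWA, hWκ, hW⟩ := exists_subset_meets_of_meets κ hκ A 𝒦
    fun D hD => mk_image_le.trans (mk_countable_subfamilies_le hκ hD)
  refine ⟨W, hWA, hWκ, mem_closure_gDelta_iff.2 fun G hG hpG => ?_⟩
  by_contra hGW
  obtain ⟨𝒞, h𝒞c, h𝒞W, hp𝒞, h𝒞⟩ := h.exists_countable_nhds_disjoint hN hG hpG
    (disjoint_iff_inter_eq_empty.2 (not_nonempty_iff_eq_empty.1 hGW))
  obtain ⟨x, hxK, hxW⟩ := hW (⋃₀ 𝒞) (sUnion_subset fun C hC => (h𝒞W C hC).1)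
    (mk_sUnion_le_of_countable hκ h𝒞c fun C hC => (h𝒞W C hC).2) _
    ⟨𝒞, ⟨fun C hC => subset_sUnion_of_mem hC, le_aleph0_iff_set_countable.2 h𝒞c⟩, rfl⟩
    (mem_closure_gDelta_iff.1 hp _ (IsGδ.biInter_of_isOpen h𝒞c fun C _ => hNo C) hp𝒞)
  exact disjoint_left.1 h𝒞 hxK hxW
end

section
/- For every topological space X, the supremum F(X) of cardinalities of free sequences in X satisfies F(X) ≤ L(X)·t(X), where L(X) is the Lindelöf number and t(X) the tightness of X. -/
open Cardinal Set Topology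

universe u

/-!
Put `κ = max L(X) t(X)`. For a free sequence whose length has cofinality `> κ`, the closures of
its tails form a decreasing chain of nonempty closed sets; since `L(X)` is below the cofinality,
their complements cannot cover `X`, so some point `p` lies in every tail closure. By tightness
`p` is in the closure of at most `t(X)` terms, which all lie in a proper initial segment, and
that contradicts freeness at the end of that segment. A free sequence longer than `κ` restricts
to one of length `κ⁺`, a regular cardinal, so this bounds `F(X)` by `κ = L(X) · t(X)`.
-/

theorem Ordinal.exists_gt_of_card_lt_cof {o : Ordinal.{u}} {ι : Type u} (hι : #ι < o.cof)
    (s : ι → {α : Ordinal.{u} // α < o}) : ∃ γ : {α : Ordinal.{u} // α < o}, ∀ i, s i < γ :=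
  ⟨⟨⨆ i, (s i).1 + 1, iSup_add_one_lt_of_lt_cof hι fun i => (s i).2⟩,
    fun i => lt_iSup_add_one (fun i => (s i).1) i⟩

section

variable {X : Type u} [tX : TopologicalSpace X]

theorem lindelofNumberOf_mem : lindelofNumberOf tX ∈ {κ : Cardinal.{u} | ℵ₀ ≤ κ ∧
    ∀ 𝒰 : Set (Set X), (∀ U ∈ 𝒰, IsOpen U) → ⋃₀ 𝒰 = Set.univ →
      ∃ 𝒱 ⊆ 𝒰, #𝒱 ≤ κ ∧ ⋃₀ 𝒱 = Set.univ} :=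
  csInf_mem ⟨max #(Set X) ℵ₀, le_max_right _ _, fun 𝒰 _ h𝒰 =>
    ⟨𝒰, Subset.rfl, le_max_of_le_left (mk_set_le 𝒰), h𝒰⟩⟩

theorem tightnessOf_mem : tightnessOf tX ∈ {κ : Cardinal.{u} | ℵ₀ ≤ κ ∧
    ∀ (A : Set X) (p : X), p ∈ closure A → ∃ B ⊆ A, #B ≤ κ ∧ p ∈ closure B} :=
  csInf_mem ⟨max #X ℵ₀, le_max_right _ _, fun A _ hp =>
    ⟨A, Subset.rfl, le_max_of_le_left (mk_set_le A), hp⟩⟩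

theorem IsFreeSeqOn.restrict {o o' : Ordinal.{u}} (h : o' ≤ o)
    {x : {α : Ordinal.{u} // α < o} → X} (hx : IsFreeSeqOn tX o x) :
    IsFreeSeqOn tX o' (fun i => x ⟨i.1, i.2.trans_le h⟩) := by
  intro i
  refine eq_empty_of_subset_empty (hx ⟨i.1, i.2.trans_le h⟩ ▸ inter_subset_inter ?_ ?_) <;>
  · refine closure_mono ?_
    rintro _ ⟨j, hj, rfl⟩
    exact ⟨⟨j.1, j.2.trans_le h⟩, hj, rfl⟩

theorem nonempty_iInter_of_lindelofNumberOf_lt_cof {o : Ordinal.{u}}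
    (hL : lindelofNumberOf tX < o.cof) {F : {α : Ordinal.{u} // α < o} → Set X}
    (hclosed : ∀ β, IsClosed (F β)) (hanti : Antitone F) (hne : ∀ β, (F β).Nonempty) :
    (⋂ β, F β).Nonempty := by
  by_contra hempty
  have hcov : ⋃₀ range (fun β => (F β)ᶜ) = Set.univ := by
    rw [sUnion_range, ← compl_iInter, ← compl_empty, not_nonempty_iff_eq_empty.1 hempty]
  obtain ⟨𝒱, h𝒱, h𝒱card, h𝒱cov⟩ := lindelofNumberOf_mem.2 _
    (forall_mem_range.2 fun β => (hclosed β).isOpen_compl) hcov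
  choose idx hidx using fun V : 𝒱 => h𝒱 V.2
  obtain ⟨γ, hγ⟩ := Ordinal.exists_gt_of_card_lt_cof (h𝒱card.trans_lt hL) idx
  obtain ⟨q, hq⟩ := hne γ
  obtain ⟨V, hV, hqV⟩ := h𝒱cov ▸ mem_univ q
  rw [← Subtype.coe_mk V hV, ← hidx ⟨V, hV⟩] at hqV
  exact hqV (hanti (hγ ⟨V, hV⟩).le hq)

theorem IsFreeSeqOn.exists_notMem_closure_tail {o : Ordinal.{u}}
    (hT : tightnessOf tX < o.cof) {y : {α : Ordinal.{u} // α < o} → X}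
    (hy : IsFreeSeqOn tX o y) (p : X) : ∃ β, p ∉ closure (y '' {j | β ≤ j}) := by
  have ho : 0 < o := pos_iff_ne_zero.2 fun h => by
    simp [h] at hT
  by_contra! hp
  have hrange : p ∈ closure (range y) :=
    closure_mono (image_subset_range _ _) (hp ⟨0, ho⟩)
  obtain ⟨B, hBy, hBcard, hpB⟩ := tightnessOf_mem.2 _ p hrange
  choose idx hidx using fun b : B => hBy b.2
  obtain ⟨γ, hγ⟩ := Ordinal.exists_gt_of_card_lt_cof (hBcard.trans_lt hT) idx
  have hBinit : B ⊆ y '' {j | j < γ} := fun b hb => ⟨idx ⟨b, hb⟩, hγ ⟨b, hb⟩, hidx ⟨b, hb⟩⟩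
  exact (hy γ).subset ⟨closure_mono hBinit hpB, hp γ⟩

theorem IsFreeSeqOn.cof_le {o : Ordinal.{u}} {y : {α : Ordinal.{u} // α < o} → X}
    (hy : IsFreeSeqOn tX o y) : o.cof ≤ max (lindelofNumberOf tX) (tightnessOf tX) := by
  by_contra! h
  obtain ⟨hL, hT⟩ := max_lt_iff.1 h
  let tail : {α : Ordinal.{u} // α < o} → Set X := fun β => closure (y '' {j | β ≤ j})
  have hanti : Antitone tail := fun β γ hβγ =>
    closure_mono (image_mono fun j (hj : γ ≤ j) => hβγ.trans hj)
  obtain ⟨p, hp⟩ := nonempty_iInter_of_lindelofNumberOf_lt_cof hL (fun _ => isClosed_closure)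
    hanti fun β => ⟨y β, subset_closure ⟨β, le_refl β, rfl⟩⟩
  obtain ⟨β, hβ⟩ := hy.exists_notMem_closure_tail hT p
  exact hβ (mem_iInter.1 hp β)

end

/-- `F(X) ≤ L(X) · t(X)` for every topological space `X`. -/
theorem statement9 {X : Type u} [tX : TopologicalSpace X] :
    freeNumberOf tX ≤ lindelofNumberOf tX * tightnessOf tX := by
  have hκ : lindelofNumberOf tX * tightnessOf tX = max (lindelofNumberOf tX) (tightnessOf tX) :=
    mul_eq_max lindelofNumberOf_mem.1 tightnessOf_mem.1
  have hκinf : ℵ₀ ≤ max (lindelofNumberOf tX) (tightnessOf tX) :=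
    le_max_of_le_left lindelofNumberOf_mem.1
  rw [hκ, freeNumberOf, sup_le_iff]
  refine ⟨hκinf, csSup_le' ?_⟩
  rintro c ⟨x, hx⟩
  by_contra! hc
  have hreg := isRegular_succ hκinf
  have hfree := hx.restrict (ord_le_ord.2 (Order.succ_le_of_lt hc))
  exact (Order.lt_succ _).not_ge (hreg.cof_ord ▸ hfree.cof_le)
end

section
/- For every compact Hausdorff space X, the tightness of X equals the supremum of the cardinalities of free sequences in X: t(X) = F(X). -/
/-!
If `x` is a free sequence of length `κ⁺` and `t(X) ≤ κ`, a cluster point `z` of the tails of `x`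
(compactness) lies in the closure of at most `κ` terms, hence, `κ⁺` being regular, in the
closure of an initial segment `{x_β : β < α}`; but `z` is also in the closure of the tail from
`α`, contradicting freeness. So `F(X) ≤ t(X)`.

Conversely (Arhangel'skii), let `κ = F(X)` and suppose `p ∈ closure A` lies in the closure of no
subset of `A` of size `≤ κ`. The `κ`-closure `C` of `A` is closed under closures of `κ`-subsets and
misses `p`. By transfinite recursion choose `x_α ∈ C` and open `U_α ∋ p` with
`closure U_α` disjoint from `closure {x_β : β < α}` and `x_α ∈ U_α ∩ ⋂_{β<α} closure U_β`; this
is possible as long as `p ∈ closure (C ∩ ⋂_{β<α} closure U_β)`, which survives every stage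
`α < κ⁺` because a cluster point of suitable `c_β ∈ U_β`, `β < α`, lies in `C`.
The `x_α` form a free sequence of length `κ⁺`, which is impossible.
-/

open Cardinal Set Topology

universe u

open Filter

universe v

lemma mk_range_le_of_lift_mk_le {α : Type v} {β : Type u} {κ : Cardinal.{u}}
    (hα : lift.{u} #α ≤ lift.{v} κ) (f : α → β) : #(range f) ≤ κ :=
  lift_le.1 (mk_range_le_lift.trans hα)

section Development

variable {X : Type u} [TopologicalSpace X]

section Tightness

variable (X) in
def HasTightnessLE (κ : Cardinal.{u}) : Prop :=
  ∀ (A : Set X) (p : X), p ∈ closure A → ∃ B ⊆ A, #B ≤ κ ∧ p ∈ closure B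

lemma hasTightnessLE_of_mk_le {κ : Cardinal.{u}} (h : #X ≤ κ) : HasTightnessLE X κ :=
  fun A _ hp => ⟨A, Subset.rfl, (mk_set_le A).trans h, hp⟩

def cardClosure (κ : Cardinal.{u}) (A : Set X) : Set X :=
  {z | ∃ B ⊆ A, #B ≤ κ ∧ z ∈ closure B}

lemma subset_cardClosure {κ : Cardinal.{u}} (hκ : 1 ≤ κ) (A : Set X) : A ⊆ cardClosure κ A :=
  fun a ha => ⟨{a}, singleton_subset_iff.2 ha, by rwa [mk_singleton], subset_closure rfl⟩

lemma closure_subset_cardClosure {κ : Cardinal.{u}} (hκ : ℵ₀ ≤ κ) {A D : Set X}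
    (hD : D ⊆ cardClosure κ A) (hDκ : #D ≤ κ) : closure D ⊆ cardClosure κ A := by
  choose B hBA hBκ hB using fun d : D => hD d.2
  refine fun z hz => ⟨⋃ d, B d, iUnion_subset hBA, ?_, closure_minimal
    (fun d hd => closure_mono (subset_iUnion B ⟨d, hd⟩) (hB ⟨d, hd⟩)) isClosed_closure hz⟩
  calc #(⋃ d, B d) ≤ #D * ⨆ d, #(B d) := mk_iUnion_le B
    _ ≤ κ * κ := mul_le_mul' hDκ (ciSup_le' hBκ)
    _ = κ := mul_eq_self hκ

end Tightness

lemma exists_forall_mem_closure_image_Ici [CompactSpace X] {ι : Type v} [Nonempty ι]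
    [LinearOrder ι] (f : ι → X) : ∃ z, ∀ i, z ∈ closure (f '' Ici i) := by
  obtain ⟨z, hz⟩ := exists_clusterPt_of_compactSpace (map f atTop)
  exact ⟨z, fun i => clusterPt_iff_forall_mem_closure.1 hz _ (image_mem_map (Ici_mem_atTop i))⟩

section FreeSequence

variable {ι : Type v}

def IsFreeSeq [Preorder ι] (x : ι → X) : Prop :=
  ∀ i, Disjoint (closure (x '' Iio i)) (closure (x '' Ici i))

lemma isFreeSeqOn_iff {o : Ordinal.{u}} {x : {α : Ordinal.{u} // α < o} → X} :
    IsFreeSeqOn ‹_› o x ↔ IsFreeSeq x :=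
  forall_congr' fun _ => disjoint_iff_inter_eq_empty.symm

lemma IsFreeSeq.comp_strictMono [Preorder ι] {α : Type*} [PartialOrder α] {x : ι → X}
    (hx : IsFreeSeq x) {f : α → ι} (hf : StrictMono f) : IsFreeSeq (x ∘ f) := by
  intro i
  refine (hx (f i)).mono (closure_mono ?_) (closure_mono ?_) <;>
    rintro _ ⟨j, hj, rfl⟩
  exacts [⟨f j, hf hj, rfl⟩, ⟨f j, hf.monotone (mem_Ici.1 hj), rfl⟩]

theorem not_isFreeSeq_of_hasTightnessLE [CompactSpace X] [LinearOrder ι] {κ : Cardinal.{u}}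
    (hX : HasTightnessLE X κ)
    (hι : ∀ s : Set ι, lift.{u} #s ≤ lift.{v} κ → ∃ i, ∀ j ∈ s, j < i) (x : ι → X) :
    ¬ IsFreeSeq x := by
  intro hx
  obtain ⟨i₀, -⟩ := hι ∅ (by simp)
  have : Nonempty ι := ⟨i₀⟩
  obtain ⟨z, hz⟩ := exists_forall_mem_closure_image_Ici x
  obtain ⟨B, hBx, hBκ, hzB⟩ :=
    hX (range x) z (closure_mono (image_subset_range _ _) (hz i₀))
  choose g hg using fun b : B => hBx b.2
  obtain ⟨i, hi⟩ := hι (range g) (mk_range_le_lift.trans (lift_le.2 hBκ))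
  have hBi : B ⊆ x '' Iio i := fun b hb => ⟨g ⟨b, hb⟩, hi _ (mem_range_self _), hg ⟨b, hb⟩⟩
  exact disjoint_left.1 (hx i) (closure_mono hBi hzB) (hz i)

end FreeSequence

section Ordinal

variable {κ : Cardinal.{u}}

lemma lift_mk_Iio_le_of_lt_ord_succ (i : {α : Ordinal.{u} // α < (Order.succ κ).ord}) :
    lift.{u} #(Iio i) ≤ lift.{u + 1} κ := by
  have h : #(Iio i) ≤ #(Iio i.1) :=
    mk_le_of_injective (f := fun j => ⟨j.1.1, j.2⟩) fun j k h => by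
      simpa [Subtype.ext_iff] using h
  rw [mk_Iio_ordinal] at h
  have hi : i.1.card ≤ κ := Order.lt_succ_iff.1 (lt_ord.1 i.2)
  exact (lift_id'.{u, u + 1} _).trans_le (h.trans (lift_le.2 hi))

lemma exists_forall_lt_of_lift_mk_le (hκ : ℵ₀ ≤ κ)
    (s : Set {α : Ordinal.{u} // α < (Order.succ κ).ord}) (hs : lift.{u} #s ≤ lift.{u + 1} κ) :
    ∃ i, ∀ j ∈ s, j < i := by
  have hsup : ⨆ j : s, j.1.1 + 1 < (Order.succ κ).ord := by
    refine Ordinal.lift_iSup_add_one_lt_of_lt_cof ?_ fun j => j.1.2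
    rw [← Ordinal.lift_cof, (isRegular_succ hκ).cof_ord]
    exact hs.trans_lt (lift_lt.2 (Order.lt_succ κ))
  refine ⟨⟨_, hsup⟩, fun j hj => Subtype.coe_lt_coe.1 (Order.add_one_le_iff.1 ?_)⟩
  exact le_ciSup (f := fun j : s => j.1.1 + 1)
    ⟨_, forall_mem_range.2 fun j => Order.add_one_le_iff.2 j.1.2⟩ ⟨j, hj⟩

end Ordinal

section Construction

variable (C : Set X) (p : X)

/-- `q = (x_α, U_α)` is an admissible choice at a stage whose earlier choices are `prev`. -/
structure IsAdmissible {α : Type*} (prev : α → X × Set X) (q : X × Set X) : Prop where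
  isOpen : IsOpen q.2
  mem : p ∈ q.2
  disjoint : Disjoint (closure q.2) (closure (range (Prod.fst ∘ prev)))
  fst_mem_snd : q.1 ∈ q.2
  fst_mem : q.1 ∈ C
  fst_mem_closure : ∀ a, q.1 ∈ closure (prev a).2

variable {C p} in
lemma exists_isAdmissible [RegularSpace X] {α : Type*} {prev : α → X × Set X}
    (hpK : p ∈ closure (C ∩ ⋂ a, closure (prev a).2))
    (hpD : p ∉ closure (range (Prod.fst ∘ prev))) : ∃ q, IsAdmissible C p prev q := by
  obtain ⟨U, ⟨hpU, hU⟩, hUD⟩ :=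
    (hasBasis_opens_closure p).mem_iff.1 (isClosed_closure.isOpen_compl.mem_nhds hpD)
  obtain ⟨y, hyU, hyC, hyK⟩ := mem_closure_iff.1 hpK U hU hpU
  exact ⟨(y, U), hU, hpU, subset_compl_iff_disjoint_right.1 hUD, hyU, hyC, mem_iInter.1 hyK⟩

lemma mem_closure_of_le {ι : Type v} [PartialOrder ι] {s : ι → X × Set X} {j k : ι} (hjk : j ≤ k)
    {q : X} (hq : q ∈ (s k).2) (hqK : ∀ l : Iio k, q ∈ closure (s l).2) :
    q ∈ closure (s j).2 :=
  hjk.eq_or_lt.elim (fun h => h ▸ subset_closure hq) fun h => hqK ⟨j, h⟩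

lemma mem_closure_inter_iInter_closure [CompactSpace X] [RegularSpace X] {C : Set X} {p : X}
    {κ : Cardinal.{u}} (hCκ : ∀ D ⊆ C, #D ≤ κ → closure D ⊆ C) (hpC : p ∈ closure C)
    {ι : Type v} [LinearOrder ι] {i : ι} (hi : lift.{u} #(Iio i) ≤ lift.{v} κ)
    {s : ι → X × Set X} (hs : ∀ j < i, IsOpen (s j).2 ∧ p ∈ (s j).2 ∧
      p ∈ closure (C ∩ ⋂ l : Iio j, closure (s l).2)) :
    p ∈ closure (C ∩ ⋂ j : Iio i, closure (s j).2) := by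
  rcases isEmpty_or_nonempty (Iio i) with hne | hne
  · simpa using hpC
  refine mem_closure_iff_nhds.2 fun V hV => ?_
  obtain ⟨W, ⟨hpW, hW⟩, hWV⟩ := (hasBasis_opens_closure p).mem_iff.1 hV
  have hc (j : Iio i) : ∃ c, c ∈ (W ∩ (s j).2) ∩ (C ∩ ⋂ l : Iio j.1, closure (s l).2) :=
    mem_closure_iff.1 (hs j j.2).2.2 _ (hW.inter (hs j j.2).1) ⟨hpW, (hs j j.2).2.1⟩
  choose c hc using hc
  obtain ⟨z, hz⟩ := exists_forall_mem_closure_image_Ici c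
  have hzc : z ∈ closure (range c) := closure_mono (image_subset_range _ _) (hz hne.some)
  refine ⟨z, hWV (closure_mono ?_ (hz hne.some)), hCκ _ ?_ (mk_range_le_of_lift_mk_le hi c) hzc,
    mem_iInter.2 fun j => closure_minimal ?_ isClosed_closure (hz j)⟩
  · rintro _ ⟨k, -, rfl⟩
    exact (hc k).1.1
  · rintro _ ⟨k, rfl⟩
    exact (hc k).2.1
  · rintro _ ⟨k, hjk, rfl⟩
    exact mem_closure_of_le (Subtype.coe_le_coe.2 hjk) (hc k).1.2 (mem_iInter.1 (hc k).2.2)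

variable {ι : Type v} [LinearOrder ι] [WellFoundedLT ι]

open Classical in
/-- The fallback `(p, ∅)` is never taken: see `freeSeqPair_spec`. -/
noncomputable def freeSeqStep (i : ι) (prev : ∀ j < i, X × Set X) : X × Set X :=
  if h : ∃ q, IsAdmissible C p (fun j : Iio i => prev j j.2) q then h.choose else (p, ∅)

noncomputable def freeSeqPair : ι → X × Set X :=
  wellFounded_lt.fix (freeSeqStep C p)

lemma isAdmissible_freeSeqPair {i : ι}
    (h : ∃ q, IsAdmissible C p (fun j : Iio i => freeSeqPair C p j.1) q) :
    IsAdmissible C p (fun j : Iio i => freeSeqPair C p j.1) (freeSeqPair C p i) := by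
  have e : freeSeqPair C p i = freeSeqStep C p i fun j _ => freeSeqPair C p j :=
    WellFounded.fix_eq _ _ _
  rw [e, freeSeqStep, dif_pos h]
  exact h.choose_spec

variable [CompactSpace X] [RegularSpace X] {κ : Cardinal.{u}}
  (hCκ : ∀ D ⊆ C, #D ≤ κ → closure D ⊆ C) (hι : ∀ i : ι, lift.{u} #(Iio i) ≤ lift.{v} κ)
include hCκ hι

lemma freeSeqPair_spec (hpC : p ∈ closure C) (hpn : p ∉ C) (i : ι) :
    p ∈ closure (C ∩ ⋂ j : Iio i, closure (freeSeqPair C p j.1).2) ∧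
      IsAdmissible C p (fun j : Iio i => freeSeqPair C p j.1) (freeSeqPair C p i) := by
  induction i using WellFoundedLT.induction with
  | _ i ih =>
  have hpK := mem_closure_inter_iInter_closure hCκ hpC (hι i) fun j hj =>
    ⟨(ih j hj).2.isOpen, (ih j hj).2.mem, (ih j hj).1⟩
  have hDC : range (Prod.fst ∘ fun j : Iio i => freeSeqPair C p j.1) ⊆ C := by
    rintro _ ⟨j, rfl⟩
    exact (ih j j.2).2.fst_mem
  refine ⟨hpK, isAdmissible_freeSeqPair C p (exists_isAdmissible hpK fun hpD => hpn ?_)⟩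
  exact hCκ _ hDC (mk_range_le_of_lift_mk_le (hι i) _) hpD

lemma isFreeSeq_fst_freeSeqPair (hpC : p ∈ closure C) (hpn : p ∉ C) :
    IsFreeSeq (Prod.fst ∘ freeSeqPair C p : ι → X) := by
  have h i := (freeSeqPair_spec C p hCκ hι hpC hpn i).2
  intro i
  rw [image_eq_range]
  refine (h i).disjoint.symm.mono_right (closure_minimal ?_ isClosed_closure)
  rintro _ ⟨j, hij, rfl⟩
  exact mem_closure_of_le hij (h j).fst_mem_snd (h j).fst_mem_closure

end Construction

theorem exists_isFreeSeq_of_not_hasTightnessLE [CompactSpace X] [RegularSpace X]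
    {κ : Cardinal.{u}} (hκ : ℵ₀ ≤ κ) (hX : ¬ HasTightnessLE X κ) {ι : Type v} [LinearOrder ι]
    [WellFoundedLT ι] (hι : ∀ i : ι, lift.{u} #(Iio i) ≤ lift.{v} κ) :
    ∃ x : ι → X, IsFreeSeq x := by
  unfold HasTightnessLE at hX
  push Not at hX
  obtain ⟨A, p, hpA, hp⟩ := hX
  have hpC : p ∉ cardClosure κ A := fun ⟨B, hBA, hBκ, hpB⟩ => hp B hBA hBκ hpB
  exact ⟨_, isFreeSeq_fst_freeSeqPair _ p (fun _ => closure_subset_cardClosure hκ) hι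
    (closure_mono (subset_cardClosure (one_le_aleph0.trans hκ) A) hpA) hpC⟩

lemma le_of_isFreeSeqOn [CompactSpace X] {κ c : Cardinal.{u}} (hκ : ℵ₀ ≤ κ)
    (hX : HasTightnessLE X κ) {x : {α : Ordinal.{u} // α < c.ord} → X}
    (hx : IsFreeSeqOn ‹_› c.ord x) : c ≤ κ := by
  by_contra! hκc
  have hord : (Order.succ κ).ord ≤ c.ord := ord_le_ord.2 (Order.succ_le_of_lt hκc)
  refine not_isFreeSeq_of_hasTightnessLE hX (exists_forall_lt_of_lift_mk_le hκ) _
    ((isFreeSeqOn_iff.1 hx).comp_strictMono (f := fun i => ⟨i.1, i.2.trans_le hord⟩) ?_)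
  exact fun _ _ h => h

end Development

/-- `t(X) = F(X)` for every compact Hausdorff space `X`. -/
theorem statement10 {X : Type u} [tX : TopologicalSpace X] [CompactSpace X] [T2Space X] :
    tightnessOf tX = freeNumberOf tX := by
  have ht : tightnessOf tX ∈ {κ | ℵ₀ ≤ κ ∧ HasTightnessLE X κ} :=
    csInf_mem ⟨ℵ₀ ⊔ #X, le_sup_left, hasTightnessLE_of_mk_le le_sup_right⟩
  set S := {c : Cardinal.{u} | ∃ x : {α : Ordinal.{u} // α < c.ord} → X, IsFreeSeqOn tX c.ord x}
  have hbound : ∀ c ∈ S, c ≤ tightnessOf tX :=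
    fun _ ⟨_, hx⟩ => le_of_isFreeSeqOn ht.1 ht.2 hx
  have hF : ℵ₀ ≤ freeNumberOf tX := le_sup_left
  refine le_antisymm (csInf_le' ⟨hF, ?_⟩) (sup_le ht.1 (csSup_le' hbound))
  by_contra hX
  obtain ⟨x, hx⟩ := exists_isFreeSeq_of_not_hasTightnessLE hF hX lift_mk_Iio_le_of_lt_ord_succ
  have hmem : Order.succ (freeNumberOf tX) ∈ S := ⟨x, isFreeSeqOn_iff.2 hx⟩
  have hsucc : Order.succ (freeNumberOf tX) ≤ freeNumberOf tX :=
    (le_csSup ⟨tightnessOf tX, hbound⟩ hmem).trans le_sup_right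
  exact (Order.lt_succ _).not_ge hsucc
end

section
/- If X is a regular (T3) space, then the tightness of the G_δ-modification of X is at most 2^{d(X)}, where d(X) is the density of X. -/
open Cardinal Set Topology

universe u

/-- The density of `X`: the least infinite cardinal `c` admitting a dense subset of
cardinality at most `c`. -/
noncomputable def densityOf (X : Type u) [TopologicalSpace X] : Cardinal.{u} :=
  sInf {c : Cardinal.{u} | ℵ₀ ≤ c ∧ ∃ D : Set X, Dense D ∧ #↥D ≤ c}

/-!
In a regular space with a dense set `D`, the sets `int (cl E)` with `E ⊆ D` form a base of at
most `2 ^ |D|` elements. Countable intersections of members of any base of `X` form a base of the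
`G_δ`-modification, so `X_δ` has a base of size at most `(2 ^ d(X)) ^ ℵ₀ = 2 ^ d(X)`, and
tightness never exceeds the size of a base: pick one point of `A` in every basic set meeting `A`.
-/

namespace TopologicalSpace

variable {X : Type u}

theorem isTopologicalBasis_isGδ_gDelta (t : TopologicalSpace X) :
    @IsTopologicalBasis X (gDelta t) {s | IsGδ s} :=
  @isTopologicalBasis_of_subbasis_of_finiteInter X (gDelta t) _ rfl
    ⟨IsGδ.univ, fun _ hs _ ht => hs.inter ht⟩

theorem IsTopologicalBasis.gDelta_iInter [t : TopologicalSpace X] {b : Set (Set X)}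
    (hb : IsTopologicalBasis b) :
    @IsTopologicalBasis X (gDelta t) (range fun f : ℕ → b => ⋂ n, (f n : Set X)) := by
  refine @isTopologicalBasis_of_isOpen_of_nhds X (gDelta t)
    (range fun f : ℕ → b => ⋂ n, (f n : Set X)) ?_ fun p O hpO hO => ?_
  · rintro _ ⟨f, rfl⟩
    exact GenerateOpen.basic _ (IsGδ.iInter_of_isOpen fun n => hb.isOpen (f n).2)
  · obtain ⟨S, hS, hpS, hSO⟩ :=
      @IsTopologicalBasis.exists_subset_of_mem_open X (gDelta t) _
        (isTopologicalBasis_isGδ_gDelta t) _ _ hpO hO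
    obtain ⟨U, hU, rfl⟩ := isGδ_iff_eq_iInter_nat.1 hS
    have hB : ∀ n, ∃ B : b, p ∈ (B : Set X) ∧ (B : Set X) ⊆ U n := fun n => by
      obtain ⟨B, hB, hpB, hBU⟩ := hb.exists_subset_of_mem_open (mem_iInter.1 hpS n) (hU n)
      exact ⟨⟨B, hB⟩, hpB, hBU⟩
    choose f hpf hfU using hB
    exact ⟨_, ⟨f, rfl⟩, mem_iInter.2 hpf, (iInter_mono hfU).trans hSO⟩

theorem isTopologicalBasis_interior_closure_of_dense [TopologicalSpace X] [RegularSpace X]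
    {D : Set X} (hD : Dense D) :
    IsTopologicalBasis (range fun E : Set D => interior (closure (Subtype.val '' E))) := by
  refine isTopologicalBasis_of_isOpen_of_nhds (by simp [isOpen_interior]) fun a U haU hU => ?_
  obtain ⟨V, hV, hVc, hVU⟩ := exists_mem_nhds_isClosed_subset (hU.mem_nhds haU)
  have hE : Subtype.val '' (Subtype.val ⁻¹' interior V : Set D) = interior V ∩ D := by
    rw [Subtype.image_preimage_coe, inter_comm]
  refine ⟨_, ⟨Subtype.val ⁻¹' interior V, rfl⟩, ?_, ?_⟩ <;> dsimp only <;> rw [hE]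
  · exact interior_maximal (hD.open_subset_closure_inter isOpen_interior) isOpen_interior
      (mem_interior_iff_mem_nhds.2 hV)
  · calc interior (closure (interior V ∩ D)) ⊆ closure (interior V ∩ D) := interior_subset
      _ ⊆ closure V := closure_mono (inter_subset_left.trans interior_subset)
      _ = V := hVc.closure_eq
      _ ⊆ U := hVU

end TopologicalSpace

open TopologicalSpace

theorem tightnessOf_le_of_isTopologicalBasis {X : Type u} {t : TopologicalSpace X}
    {b : Set (Set X)} (hb : @IsTopologicalBasis X t b) {κ : Cardinal.{u}} (hκ : ℵ₀ ≤ κ)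
    (hbκ : #b ≤ κ) : tightnessOf t ≤ κ := by
  refine csInf_le' ⟨hκ, fun A p hp => ?_⟩
  let B := range fun o : {o : b // ((o : Set X) ∩ A).Nonempty} => o.2.some
  refine ⟨B, ?_, mk_range_le.trans ((mk_subtype_le _).trans hbκ), ?_⟩
  · rintro _ ⟨o, rfl⟩
    exact o.2.some_mem.2
  · refine hb.mem_closure_iff.2 fun o ho hpo => ?_
    have hoA := hb.mem_closure_iff.1 hp o ho hpo
    exact ⟨_, hoA.some_mem.1, ⟨⟨o, ho⟩, hoA⟩, rfl⟩

theorem densityOf_mem (X : Type u) [TopologicalSpace X] :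
    densityOf X ∈ {c | ℵ₀ ≤ c ∧ ∃ D : Set X, Dense D ∧ #D ≤ c} :=
  csInf_mem ⟨ℵ₀ ⊔ #X, le_sup_left, univ, dense_univ, mk_univ.trans_le le_sup_right⟩

/-- for regular `X`, `t(X_δ) ≤ 2^{d(X)}`. -/
theorem statement11 {X : Type u} [tX : TopologicalSpace X] [T3Space X] :
    tightnessOf (gDelta tX) ≤ 2 ^ densityOf X := by
  obtain ⟨hd, D, hD, hDd⟩ := densityOf_mem X
  set b := range fun E : Set D => interior (closure (Subtype.val '' E))
  have hb_card : #b ≤ 2 ^ densityOf X :=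
    mk_range_le.trans (by rw [mk_set]; exact power_le_power_left two_ne_zero hDd)
  refine tightnessOf_le_of_isTopologicalBasis
    (isTopologicalBasis_interior_closure_of_dense hD).gDelta_iInter (hd.trans (cantor _).le) ?_
  calc #(range fun f : ℕ → b => ⋂ n, (f n : Set X)) ≤ #(ℕ → b) := mk_range_le
    _ = #b ^ ℵ₀ := by simp
    _ ≤ (2 ^ densityOf X) ^ ℵ₀ := power_le_power_right hb_card
    _ = 2 ^ densityOf X := by rw [← power_mul, mul_aleph0_eq hd]
end

section
/- The Σ-product Σ(2^κ) = {x ∈ 2^κ : x has countable support}, as a subspace of the product 2^κ, is countably compact but not compact, for every uncountable cardinal κ. -/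
/-!
The union `A` of the supports of a sequence in the Σ-product is countable, so the sequence lies
in the compact set of points vanishing off `A`, which is itself contained in the Σ-product; hence
the sequence has a cluster point there. On the other hand the Σ-product contains every finitely
supported point, so it is dense in `2^κ`; as it misses the constant point `true` when `κ` is
uncountable, it is not closed, hence not compact.
-/

open Cardinal Set Topology

universe u

open Filter

section

variable {ι : Type*} {X : ι → Type*} [∀ i, TopologicalSpace (X i)]

def sigmaProduct (b : ∀ i, X i) : Set (∀ i, X i) :=
  {x | {i | x i ≠ b i}.Countable}

theorem isCompact_setOf_forall_notMem_eq [∀ i, CompactSpace (X i)] (b : ∀ i, X i) (A : Set ι) :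
    IsCompact {x : ∀ i, X i | ∀ i ∉ A, x i = b i} := by
  classical
  have hK : IsCompact (pi univ fun i => if i ∈ A then univ else {b i}) :=
    isCompact_univ_pi fun i => by split_ifs; exacts [isCompact_univ, isCompact_singleton]
  convert hK using 1
  ext x
  refine forall_congr' fun i => ?_
  by_cases hi : i ∈ A <;> simp [hi]

theorem isCountablyCompact_sigmaProduct [∀ i, CompactSpace (X i)] (b : ∀ i, X i) :
    IsCountablyCompact (sigmaProduct b) := by
  refine IsCountablyCompact.of_seq_clusterPt fun x hx => ?_
  set A := ⋃ (n) (_ : x n ∈ sigmaProduct b), {i | x n i ≠ b i}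
  have hA : A.Countable := countable_iUnion fun n => countable_iUnion fun hn => hn
  have hxA : ∀ᶠ n in atTop, x n ∈ {y : ∀ i, X i | ∀ i ∉ A, y i = b i} :=
    hx.mono fun n hn i hi => not_not.mp fun hne => hi (mem_biUnion hn hne)
  obtain ⟨a, haA, ha⟩ :=
    (isCompact_setOf_forall_notMem_eq b A).isCountablyCompact.seq_clusterPt x hxA
  exact ⟨a, hA.mono fun i hne => not_not.mp fun hi => hne (haA i hi), ha⟩

theorem dense_sigmaProduct (b : ∀ i, X i) : Dense (sigmaProduct b) := by
  classical
  intro y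
  rw [mem_closure_iff_nhds]
  intro t ht
  rw [nhds_pi, Filter.mem_pi] at ht
  obtain ⟨I, hI, s, hs, hsub⟩ := ht
  refine ⟨I.piecewise y b, hsub fun i hi => ?_, hI.countable.mono fun i hne => ?_⟩
  · simpa [piecewise_eq_of_mem _ _ _ hi] using mem_of_mem_nhds (hs i)
  · by_contra hi
    exact hne (piecewise_eq_of_notMem _ _ _ hi)

end

theorem sigmaProduct_false {ι : Type*} :
    sigmaProduct (fun _ : ι => false) = {x : ι → Bool | (x ⁻¹' {true}).Countable} := by
  ext x
  simp [sigmaProduct, preimage]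

/-- for uncountable `κ`, the Σ-product `Σ(2^κ)` is countably compact but
not compact. -/
theorem statement16 {ι : Type u} (hι : ℵ₀ < #ι) :
    (∀ 𝒰 : Set (Set {x : ι → Bool // (x ⁻¹' {true}).Countable}), 𝒰.Countable →
      (∀ U ∈ 𝒰, IsOpen U) → ⋃₀ 𝒰 = Set.univ →
      ∃ 𝒱 ⊆ 𝒰, 𝒱.Finite ∧ ⋃₀ 𝒱 = Set.univ) ∧
    ¬CompactSpace {x : ι → Bool // (x ⁻¹' {true}).Countable} := by
  constructor
  · intro 𝒰 h𝒰 hopen hcover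
    have hcc : IsCountablyCompact {x : ι → Bool | (x ⁻¹' {true}).Countable} :=
      sigmaProduct_false ▸ isCountablyCompact_sigmaProduct _
    have : CountablyCompactSpace {x : ι → Bool // (x ⁻¹' {true}).Countable} :=
      isCountablyCompact_iff_countablyCompactSpace.mp hcc
    have h𝒰cover : Set.univ ⊆ ⋃ U ∈ 𝒰, id U := by simpa [← sUnion_eq_biUnion] using hcover.ge
    obtain ⟨𝒱, h𝒱𝒰, h𝒱, h𝒱cover⟩ :=
      CountablyCompactSpace.isCountablyCompact_univ.elim_finite_subcover_image h𝒰 hopen h𝒰cover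
    exact ⟨𝒱, h𝒱𝒰, h𝒱, univ_subset_iff.mp (by simpa [sUnion_eq_biUnion] using h𝒱cover)⟩
  · intro hcompact
    have hclosed := (isCompact_iff_compactSpace.mpr hcompact).isClosed
    have hdense : Dense {x : ι → Bool | (x ⁻¹' {true}).Countable} :=
      sigmaProduct_false ▸ dense_sigmaProduct _
    have htrue : (fun _ => true) ∈ {x : ι → Bool | (x ⁻¹' {true}).Countable} :=
      hclosed.closure_eq ▸ hdense.closure_eq ▸ mem_univ _
    have : Countable ι := countable_univ_iff.mp (by simpa using htrue)
    exact hι.not_ge (mk_le_aleph0_iff.mpr this)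
end

section
/- The Σ-product Σ(2^κ) = {x ∈ 2^κ : x has countable support} is a Fréchet–Urysohn space: for every A ⊆ Σ(2^κ) and every x in the closure of A, there is a sequence of points of A converging to x. In particular, Σ(2^κ) has countable tightness. -/
open Cardinal Set Topology

universe u

/-!
In a subspace of a product of discrete spaces whose points pairwise differ in countably many
coordinates, let `p` lie in the closure of `A`. For every finite set `F` of coordinates pick
`g F ∈ A` agreeing with `p` on `F`. Each `g F` differs from `p` on countably many coordinates
only, so there is a countable set `S` of coordinates containing the disagreement set of `g F`
whenever `F ⊆ S`. Exhausting `S` by finite sets `Fₙ`, the sequence `g Fₙ` agrees with `p` at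
every coordinate outside `S` and, eventually, at every coordinate inside `S`; so it converges
to `p`.
-/

open Filter

theorem exists_countable_forall_finset_subset_imp_subset {ι : Type*} {c : Finset ι → Set ι}
    (hc : ∀ F, (c F).Countable) :
    ∃ S : Set ι, S.Countable ∧ ∀ F : Finset ι, ↑F ⊆ S → c F ⊆ S := by
  let T : ℕ → Set ι := fun n => Nat.rec ∅ (fun _ t => t ∪ ⋃ F ∈ {F : Finset ι | ↑F ⊆ t}, c F) n
  have hT_succ (n : ℕ) : T (n + 1) = T n ∪ ⋃ F ∈ {F : Finset ι | ↑F ⊆ T n}, c F := rfl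
  have hT_mono : Monotone T :=
    monotone_nat_of_le_succ fun n => (hT_succ n).symm ▸ subset_union_left
  refine ⟨⋃ n, T n, countable_iUnion fun n => ?_, fun F hF => ?_⟩
  · induction n with
    | zero => exact countable_empty
    | succ n ih =>
      have hsub : {F : Finset ι | ↑F ⊆ T n}.Countable := by
        refine ((countable_ofPred_finite_subset ih).preimage Finset.coe_injective).mono ?_
        exact fun F hF => ⟨F.finite_toSet, hF⟩
      exact hT_succ n ▸ ih.union (hsub.biUnion fun F _ => hc F)
  · obtain ⟨n, hn⟩ := hT_mono.directed_le.exists_mem_subset_of_finset_subset_biUnion hF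
    calc c F ⊆ T (n + 1) := hT_succ n ▸ subset_union_of_subset_right (subset_biUnion_of_mem hn) _
      _ ⊆ ⋃ n, T n := subset_iUnion T (n + 1)

theorem Set.Countable.exists_finset_eventually_mem {ι : Type*} {S : Set ι} (hS : S.Countable) :
    ∃ F : ℕ → Finset ι, (∀ n, ↑(F n) ⊆ S) ∧ ∀ i ∈ S, ∀ᶠ n in atTop, i ∈ F n := by
  classical
  rcases S.eq_empty_or_nonempty with rfl | hne
  · exact ⟨fun _ => ∅, fun _ => by simp, fun _ => by simp⟩
  obtain ⟨e, rfl⟩ := hS.exists_eq_range hne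
  refine ⟨fun n => (Finset.range n).image e, fun n => by simp, ?_⟩
  rintro _ ⟨k, rfl⟩
  filter_upwards [eventually_gt_atTop k] with n hn
  exact Finset.mem_image_of_mem e (Finset.mem_range.2 hn)

theorem frechetUrysohnSpace_of_countable_setOf_ne {ι : Type*} {Y : ι → Type*}
    [∀ i, TopologicalSpace (Y i)] [∀ i, DiscreteTopology (Y i)] (X : Set (∀ i, Y i))
    (hX : ∀ x ∈ X, ∀ y ∈ X, {i | x i ≠ y i}.Countable) : FrechetUrysohnSpace X := by
  refine ⟨fun A p hp => ?_⟩
  have agree (F : Finset ι) : ∃ a ∈ A, ∀ i ∈ F, (a : ∀ i, Y i) i = p.1 i := by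
    have hnhds : Subtype.val ⁻¹' (F : Set ι).pi (fun i => {p.1 i}) ∈ 𝓝 p :=
      continuous_subtype_val.continuousAt.preimage_mem_nhds
        (set_pi_mem_nhds F.finite_toSet fun i _ => mem_nhds_discrete.2 rfl)
    obtain ⟨a, ha, haA⟩ := mem_closure_iff_nhds.1 hp _ hnhds
    exact ⟨a, haA, ha⟩
  choose g hgA hg using agree
  obtain ⟨S, hS, hgS⟩ := exists_countable_forall_finset_subset_imp_subset
    (c := fun F => {i | (g F).1 i ≠ p.1 i}) fun F => hX _ (g F).2 _ p.2
  obtain ⟨F, hFS, hF⟩ := hS.exists_finset_eventually_mem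
  refine ⟨g ∘ F, fun n => hgA _, ?_⟩
  rw [tendsto_subtype_rng, tendsto_pi_nhds]
  intro i
  simp only [nhds_discrete, tendsto_pure, Function.comp_apply]
  by_cases hi : i ∈ S
  · filter_upwards [hF i hi] with n hn using hg _ _ hn
  · exact Eventually.of_forall fun n => not_not.1 fun hne => hi (hgS _ (hFS n) hne)

theorem tightnessOf_le_aleph0 {X : Type u} [TopologicalSpace X] [FrechetUrysohnSpace X] :
    tightnessOf (inferInstance : TopologicalSpace X) ≤ ℵ₀ := by
  refine csInf_le' ⟨le_rfl, fun A p hp => ?_⟩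
  obtain ⟨x, hxA, hx⟩ := mem_closure_iff_seq_limit.1 hp
  exact ⟨range x, range_subset_iff.2 hxA, mk_le_aleph0_iff.2 (countable_range x).to_subtype,
    mem_closure_of_tendsto hx (Eventually.of_forall mem_range_self)⟩

theorem setOf_ne_subset_preimage_true_union {ι : Type*} (x y : ι → Bool) :
    {i | x i ≠ y i} ⊆ x ⁻¹' {true} ∪ y ⁻¹' {true} := by
  intro i
  cases hx : x i <;> cases hy : y i <;> simp [hx, hy]

/-- the Σ-product `Σ(2^κ)` is Fréchet–Urysohn; in particular it has
countable tightness. -/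
theorem statement17 {ι : Type u} :
    FrechetUrysohnSpace {x : ι → Bool // (x ⁻¹' {true}).Countable} ∧
    tightnessOf (inferInstance :
      TopologicalSpace {x : ι → Bool // (x ⁻¹' {true}).Countable}) ≤ ℵ₀ := by
  have : FrechetUrysohnSpace {x : ι → Bool // (x ⁻¹' {true}).Countable} :=
    frechetUrysohnSpace_of_countable_setOf_ne {x | (x ⁻¹' {true}).Countable}
      fun x hx y hy => (hx.union hy).mono (setOf_ne_subset_preimage_true_union x y)
  exact ⟨this, tightnessOf_le_aleph0⟩
end

section
/- Let X be a topological space, W ⊆ X, and 𝒰 a family of open sets such that for every countable C ⊆ W there is U ∈ 𝒰 with closure(C) ⊆ U, and no countable subfamily of 𝒰 covers W; then one can recursively construct points x_β ∈ W and sets U_β ∈ 𝒰 for β < ω₁ such that closure({x_γ : γ < β}) ⊆ U_β and x_β ∉ ⋃_{τ ≤ β} U_τ, and the resulting (x_β)_{β<ω₁} is a free sequence, so X contains an uncountable free sequence. -/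
open Cardinal Set Topology

universe u

namespace S19

variable {X : Type u} [tX : TopologicalSpace X]

abbrev S : Type (u+1) := {α : Ordinal.{u} // α < (aleph 1).ord}

lemma countable_lt (β : S) : {γ : S | γ < β}.Countable := by
  have h1 : (Set.Iio β.val).Countable := by
    rw [countable_iff_lt_aleph_one, Ordinal.mk_Iio_ordinal, lift_lt_aleph_one]
    exact Cardinal.lt_ord.mp β.2
  have : {γ : S | γ < β} = (fun γ : S => γ.val) ⁻¹' Set.Iio β.val := rfl
  rw [this]
  exact h1.preimage Subtype.val_injective

open Classical in
noncomputable def nextU (𝒰 : Set (Set X)) (C : Set X) : Set X :=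
  if h : ∃ U ∈ 𝒰, closure C ⊆ U then h.choose else ∅

open Classical in
lemma nextU_spec {𝒰 : Set (Set X)} {C : Set X} (h : ∃ U ∈ 𝒰, closure C ⊆ U) :
    nextU 𝒰 C ∈ 𝒰 ∧ closure C ⊆ nextU 𝒰 C := by
  rw [nextU, dif_pos h]; exact ⟨h.choose_spec.1, h.choose_spec.2⟩

open Classical in
noncomputable def nextX (W : Set X) (hW : W.Nonempty) (V : Set (Set X)) : X :=
  if h : ∃ p ∈ W, ∀ u ∈ V, p ∉ u then h.choose else hW.choose

open Classical in
lemma nextX_spec {W : Set X} (hW : W.Nonempty) {V : Set (Set X)}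
    (h : ∃ p ∈ W, ∀ u ∈ V, p ∉ u) :
    nextX W hW V ∈ W ∧ ∀ u ∈ V, nextX W hW V ∉ u := by
  rw [nextX, dif_pos h]; exact ⟨h.choose_spec.1, h.choose_spec.2⟩

noncomputable def step (W : Set X) (𝒰 : Set (Set X)) (hW : W.Nonempty)
    (β : S) (prev : ∀ γ : S, γ < β → X × Set X) : X × Set X :=
  (nextX W hW (insert (nextU 𝒰 {p | ∃ γ : S, ∃ h : γ < β, (prev γ h).1 = p})
      {u | ∃ γ : S, ∃ h : γ < β, (prev γ h).2 = u}),
   nextU 𝒰 {p | ∃ γ : S, ∃ h : γ < β, (prev γ h).1 = p})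

noncomputable def g (W : Set X) (𝒰 : Set (Set X)) (hW : W.Nonempty) : S → X × Set X :=
  WellFounded.fix wellFounded_lt (step W 𝒰 hW)

lemma g_eq (W : Set X) (𝒰 : Set (Set X)) (hW : W.Nonempty) (β : S) :
    g W 𝒰 hW β = step W 𝒰 hW β (fun γ _ => g W 𝒰 hW γ) :=
  WellFounded.fix_eq _ _ _

end S19

namespace S19b
open S19

variable {X : Type u} [tX : TopologicalSpace X]

lemma g_spec (W : Set X) (𝒰 : Set (Set X)) (hW : W.Nonempty)
    (hcov : ∀ C ⊆ W, C.Countable → ∃ U ∈ 𝒰, closure C ⊆ U)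
    (hnot : ¬∃ 𝒱 ⊆ 𝒰, 𝒱.Countable ∧ W ⊆ ⋃₀ 𝒱) :
    ∀ β : S, (g W 𝒰 hW β).1 ∈ W ∧ (g W 𝒰 hW β).2 ∈ 𝒰 ∧
      closure ((fun γ : S => (g W 𝒰 hW γ).1) '' {γ : S | γ < β}) ⊆ (g W 𝒰 hW β).2 ∧
      ((g W 𝒰 hW β).1 ∉ (g W 𝒰 hW β).2 ∧
        ∀ γ : S, γ < β → (g W 𝒰 hW β).1 ∉ (g W 𝒰 hW γ).2) := by
  set P : S → Prop := fun β => (g W 𝒰 hW β).1 ∈ W ∧ (g W 𝒰 hW β).2 ∈ 𝒰 ∧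
      closure ((fun γ : S => (g W 𝒰 hW γ).1) '' {γ : S | γ < β}) ⊆ (g W 𝒰 hW β).2 ∧
      ((g W 𝒰 hW β).1 ∉ (g W 𝒰 hW β).2 ∧
        ∀ γ : S, γ < β → (g W 𝒰 hW β).1 ∉ (g W 𝒰 hW γ).2) with hP
  intro β
  show P β
  refine wellFounded_lt.induction (C := P) β ?_
  clear β; intro β IH
  rw [hP]
  simp only [hP] at IH
  set G : S → X × Set X := g W 𝒰 hW with hG
  have hCeq : {p | ∃ γ : S, ∃ _h : γ < β, (G γ).1 = p}
      = (fun γ : S => (G γ).1) '' {γ : S | γ < β} := by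
    ext p
    simp only [Set.mem_image, Set.mem_setOf_eq]
    exact ⟨fun ⟨γ, h, e⟩ => ⟨γ, h, e⟩, fun ⟨γ, h, e⟩ => ⟨γ, h, e⟩⟩
  set C : Set X := (fun γ : S => (G γ).1) '' {γ : S | γ < β} with hC
  have hCW : C ⊆ W := by
    rintro p ⟨γ, hγ, rfl⟩
    exact (IH γ hγ).1
  have hCc : C.Countable := (countable_lt β).image _
  have hU : ∃ U ∈ 𝒰, closure C ⊆ U := hcov C hCW hCc
  obtain ⟨hU1, hU2⟩ := nextU_spec hU
  -- the countable family used so far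
  have hVeq : {u | ∃ γ : S, ∃ _h : γ < β, (G γ).2 = u}
      = (fun γ : S => (G γ).2) '' {γ : S | γ < β} := by
    ext u
    simp only [Set.mem_image, Set.mem_setOf_eq]
    exact ⟨fun ⟨γ, h, e⟩ => ⟨γ, h, e⟩, fun ⟨γ, h, e⟩ => ⟨γ, h, e⟩⟩
  set V : Set (Set X) := insert (nextU 𝒰 C) ((fun γ : S => (G γ).2) '' {γ : S | γ < β})
    with hV
  have hVU : V ⊆ 𝒰 := by
    rintro u (rfl | ⟨γ, hγ, rfl⟩)
    · exact hU1
    · exact (IH γ hγ).2.1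
  have hVc : V.Countable := (((countable_lt β).image _).insert _)
  have hx : ∃ p ∈ W, ∀ u ∈ V, p ∉ u := by
    by_contra hcon
    push_neg at hcon
    refine hnot ⟨V, hVU, hVc, fun p hp => ?_⟩
    obtain ⟨u, hu, hpu⟩ := hcon p hp
    exact ⟨u, hu, hpu⟩
  obtain ⟨hx1, hx2⟩ := nextX_spec hW hx
  have hGβ : G β = (nextX W hW V, nextU 𝒰 C) := by
    rw [hG, g_eq, step]
    simp only [← hG, hCeq, ← hC, hVeq, ← hV]
  rw [hGβ]
  refine ⟨hx1, hU1, hU2, ?_, ?_⟩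
  · exact hx2 _ (Set.mem_insert _ _)
  · intro γ hγ
    exact hx2 _ (Set.mem_insert_of_mem _ ⟨γ, hγ, rfl⟩)

end S19b

/-- if `𝒰` is an open family such that the closure of every countable
subset of `W` lies in some member of `𝒰`, and no countable subfamily of `𝒰` covers `W`,
then one can construct points `x_β ∈ W` and sets `U_β ∈ 𝒰` for `β < ω₁` with
`closure {x_γ : γ < β} ⊆ U_β` and `x_β ∉ ⋃_{τ ≤ β} U_τ`, and `(x_β)_{β<ω₁}` is a free
sequence (hence `X` contains an uncountable free sequence). -/
theorem statement19 {X : Type u} [tX : TopologicalSpace X] (W : Set X) (𝒰 : Set (Set X))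
    (hopen : ∀ U ∈ 𝒰, IsOpen U)
    (hcov : ∀ C ⊆ W, C.Countable → ∃ U ∈ 𝒰, closure C ⊆ U)
    (hnot : ¬∃ 𝒱 ⊆ 𝒰, 𝒱.Countable ∧ W ⊆ ⋃₀ 𝒱) :
    ∃ (x : {α : Ordinal.{u} // α < (aleph 1).ord} → X)
      (U : {α : Ordinal.{u} // α < (aleph 1).ord} → Set X),
      (∀ β, x β ∈ W) ∧ (∀ β, U β ∈ 𝒰) ∧
      (∀ β, closure (x '' {γ | γ < β}) ⊆ U β) ∧
      (∀ β, x β ∉ ⋃ τ ∈ {τ | τ ≤ β}, U τ) ∧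
      IsFreeSeqOn tX (aleph 1).ord x := by
  have hW : W.Nonempty := by
    rcases Set.eq_empty_or_nonempty W with h | h
    · exact absurd ⟨∅, Set.empty_subset _, Set.countable_empty, by simp [h]⟩ hnot
    · exact h
  have spec := S19b.g_spec W 𝒰 hW hcov hnot
  refine ⟨fun β => (S19.g W 𝒰 hW β).1, fun β => (S19.g W 𝒰 hW β).2,
    fun β => (spec β).1, fun β => (spec β).2.1, fun β => (spec β).2.2.1, ?_, ?_⟩
  · intro β
    simp only [Set.mem_iUnion, Set.mem_setOf_eq, not_exists]
    intro τ hτ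
    rcases lt_or_eq_of_le hτ with h | h
    · exact (spec β).2.2.2.2 τ h
    · rw [h]; exact (spec β).2.2.2.1
  · intro i
    rw [Set.eq_empty_iff_forall_notMem]
    rintro p ⟨hp1, hp2⟩
    have h1 : p ∈ (S19.g W 𝒰 hW i).2 := (spec i).2.2.1 hp1
    have h2 : p ∈ ((S19.g W 𝒰 hW i).2)ᶜ := by
      have hcl : IsClosed ((S19.g W 𝒰 hW i).2)ᶜ :=
        (hopen _ ((spec i).2.1)).isClosed_compl
      refine hcl.closure_subset_iff.mpr ?_ hp2
      rintro q ⟨j, hij, rfl⟩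
      rcases lt_or_eq_of_le (a := i) (b := j) hij with h | h
      · exact (spec j).2.2.2.2 i h
      · rw [← h]; exact (spec i).2.2.2.1
    exact h2 h1
end
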